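/- Let O be the acyclic ELU ontology {A ≡ (B₁ ⊓ B₂) ⊔ (B₁ ⊓ B₃)} and let O' = {B₁ ⊓ B₂ ⊑ A, B₁ ⊓ B₃ ⊑ A, A ⊑ B₁}. Then for all EL concepts C, D over the concept names {A, B₁, B₂, B₃} (and arbitrary role names), O ⊨ C ⊑ D if and only if O' ⊨ C ⊑ D. -/
import Mathlib


namespace DL

/- Basic description-logic framework: concepts, interpretations, ontologies. -/

inductive Concept (Cn R : Type) : Type where
  | top  : Concept Cn R
  | bot  : Concept Cn R
  | name : Cn → Concept Cn R
  | neg  : Concept Cn R → Concept Cn R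
  | conj : Concept Cn R → Concept Cn R → Concept Cn R
  | disj : Concept Cn R → Concept Cn R → Concept Cn R
  | ex   : R → Concept Cn R → Concept Cn R
  | all  : R → Concept Cn R → Concept Cn R
  deriving DecidableEq

namespace Concept
variable {Cn R : Type}

/-- `EL` concepts: only ⊤, concept names, ⊓ and ∃r.C. -/
def isEL : Concept Cn R → Prop
  | top => True
  | bot => False
  | name _ => True
  | neg _ => False
  | conj c d => c.isEL ∧ d.isEL
  | disj _ _ => False
  | ex _ c => c.isEL
  | all _ _ => False

/-- `ELU` concepts: additionally allow ⊔. -/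
def isELU : Concept Cn R → Prop
  | top => True
  | bot => False
  | name _ => True
  | neg _ => False
  | conj c d => c.isELU ∧ d.isELU
  | disj c d => c.isELU ∧ d.isELU
  | ex _ c => c.isELU
  | all _ _ => False

/-- `EL⊥` concepts. -/
def isELbot : Concept Cn R → Prop
  | top => True
  | bot => True
  | name _ => True
  | neg _ => False
  | conj c d => c.isELbot ∧ d.isELbot
  | disj _ _ => False
  | ex _ c => c.isELbot
  | all _ _ => False

/-- `ELU⊥` concepts. -/
def isELUbot : Concept Cn R → Prop
  | top => True
  | bot => True
  | name _ => True
  | neg _ => False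
  | conj c d => c.isELUbot ∧ d.isELUbot
  | disj c d => c.isELUbot ∧ d.isELUbot
  | ex _ c => c.isELUbot
  | all _ _ => False

/-- the nesting depth of ∃/∀ restrictions. -/
def depth : Concept Cn R → ℕ
  | top => 0
  | bot => 0
  | name _ => 0
  | neg c => c.depth
  | conj c d => max c.depth d.depth
  | disj c d => max c.depth d.depth
  | ex _ c => c.depth + 1
  | all _ c => c.depth + 1

/-- size of a concept (occurrences of symbols). -/
def size : Concept Cn R → ℕ
  | top => 1
  | bot => 1
  | name _ => 1
  | neg c => c.size + 1
  | conj c d => c.size + d.size + 1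
  | disj c d => c.size + d.size + 1
  | ex _ c => c.size + 2
  | all _ c => c.size + 2

/-- set of subconcepts. -/
def sub : Concept Cn R → Set (Concept Cn R)
  | top => {top}
  | bot => {bot}
  | name A => {name A}
  | neg c => insert (neg c) c.sub
  | conj c d => insert (conj c d) (c.sub ∪ d.sub)
  | disj c d => insert (disj c d) (c.sub ∪ d.sub)
  | ex r c => insert (ex r c) c.sub
  | all r c => insert (all r c) c.sub

/-- concept names occurring in a concept. -/
def names : Concept Cn R → Set Cn
  | top => ∅
  | bot => ∅
  | name A => {A}
  | neg c => c.names
  | conj c d => c.names ∪ d.names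
  | disj c d => c.names ∪ d.names
  | ex _ c => c.names
  | all _ c => c.names

/-- role names occurring in a concept. -/
def roles : Concept Cn R → Set R
  | top => ∅
  | bot => ∅
  | name _ => ∅
  | neg c => c.roles
  | conj c d => c.roles ∪ d.roles
  | disj c d => c.roles ∪ d.roles
  | ex r c => insert r c.roles
  | all r c => insert r c.roles

/-- top-level conjuncts of a concept. -/
def tlConj : Concept Cn R → Set (Concept Cn R)
  | conj c d => c.tlConj ∪ d.tlConj
  | c => {c}

end Concept

/-- n-fold nesting of ∃r applied to a concept. -/
def exN {Cn R : Type} (r : R) : ℕ → Concept Cn R → Concept Cn R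
  | 0, c => c
  | n + 1, c => Concept.ex r (exN r n c)

/-- An interpretation: a domain together with extensions of concept and role names. -/
structure Interp (Cn R : Type) : Type 1 where
  Dom : Type
  cI : Cn → Set Dom
  rI : R → Set (Dom × Dom)

/-- Semantics of concepts. -/
def Interp.interp {Cn R : Type} (I : Interp Cn R) : Concept Cn R → Set I.Dom
  | .top => Set.univ
  | .bot => ∅
  | .name A => I.cI A
  | .neg c => (I.interp c)ᶜ
  | .conj c d => I.interp c ∩ I.interp d
  | .disj c d => I.interp c ∪ I.interp d
  | .ex r c => {x | ∃ y, (x, y) ∈ I.rI r ∧ y ∈ I.interp c}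
  | .all r c => {x | ∀ y, (x, y) ∈ I.rI r → y ∈ I.interp c}

/-- An ontology: a set of concept inclusions `C ⊑ D`, coded as pairs `(C, D)`. -/
abbrev Ontology (Cn R : Type) := Set (Concept Cn R × Concept Cn R)

/-- `I` is a model of the ontology `O`. -/
def Interp.isModel {Cn R : Type} (I : Interp Cn R) (O : Ontology Cn R) : Prop :=
  ∀ ci ∈ O, I.interp ci.1 ⊆ I.interp ci.2

/-- `O ⊨ c ⊑ d`. -/
def entails {Cn R : Type} (O : Ontology Cn R) (c d : Concept Cn R) : Prop :=
  ∀ I : Interp Cn R, I.isModel O → I.interp c ⊆ I.interp d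

/-- logical equivalence (w.r.t. the empty ontology). -/
def lequiv {Cn R : Type} (c d : Concept Cn R) : Prop :=
  entails ∅ c d ∧ entails ∅ d c

/-- set of subconcepts of an ontology. -/
def subO {Cn R : Type} (O : Ontology Cn R) : Set (Concept Cn R) :=
  {F | ∃ ci ∈ O, F ∈ ci.1.sub ∪ ci.2.sub}

/-- concept names of an ontology. -/
def sigC {Cn R : Type} (O : Ontology Cn R) : Set Cn :=
  {A | ∃ ci ∈ O, A ∈ ci.1.names ∪ ci.2.names}

/-- role names of an ontology. -/
def sigR {Cn R : Type} (O : Ontology Cn R) : Set R :=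
  {r | ∃ ci ∈ O, r ∈ ci.1.roles ∪ ci.2.roles}


/- STATEMENT 11: O = {A ≡ (B₁ ⊓ B₂) ⊔ (B₁ ⊓ B₃)} (as two inclusions) and
   O' = {B₁ ⊓ B₂ ⊑ A, B₁ ⊓ B₃ ⊑ A, A ⊑ B₁} have the same EL consequences over
   the concept names {A, B₁, B₂, B₃} (with arbitrary role names). -/

-- concept names: A = 0, B₁ = 1, B₂ = 2, B₃ = 3
def cA {R : Type} : Concept ℕ R := .name 0
def cB₁ {R : Type} : Concept ℕ R := .name 1
def cB₂ {R : Type} : Concept ℕ R := .name 2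
def cB₃ {R : Type} : Concept ℕ R := .name 3

/-- O = {A ≡ (B₁ ⊓ B₂) ⊔ (B₁ ⊓ B₃)}: the equivalence coded as two inclusions. -/
def O₁₁ (R : Type) : Ontology ℕ R :=
  {(cA, .disj (.conj cB₁ cB₂) (.conj cB₁ cB₃)),
   (.disj (.conj cB₁ cB₂) (.conj cB₁ cB₃), cA)}

def O₁₁' (R : Type) : Ontology ℕ R :=
  {(.conj cB₁ cB₂, cA), (.conj cB₁ cB₃, cA), (cA, cB₁)}

section Stmt11Aux

open scoped Classical

variable {R : Type}

/-- pick a conjunct of `E` that fails at `u` in `I` (if `E` fails). -/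
noncomputable def reduceC (I : Interp ℕ R) (u : I.Dom) : Concept ℕ R → Concept ℕ R
  | .conj c d => if u ∈ I.interp c then reduceC I u d else reduceC I u c
  | c => c

lemma reduceC_conj (I : Interp ℕ R) (u : I.Dom) (c d : Concept ℕ R) :
    reduceC I u (.conj c d) = if u ∈ I.interp c then reduceC I u d else reduceC I u c := rfl

lemma reduceC_name (I : Interp ℕ R) (u : I.Dom) (n : ℕ) :
    reduceC I u (.name n) = .name n := rfl

lemma reduceC_ex (I : Interp ℕ R) (u : I.Dom) (r : R) (c : Concept ℕ R) :
    reduceC I u (.ex r c) = .ex r c := rfl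

/-- endpoint of a path (unraveling node). -/
def endpt (I : Interp ℕ R) (x : I.Dom) : List (R × I.Dom) → I.Dom
  | [] => x
  | (_, v) :: _ => v

/-- the unraveling of `I` at `x`. -/
def TT (I : Interp ℕ R) (x : I.Dom) : Interp ℕ R where
  Dom := List (R × I.Dom)
  cI n := {l | endpt I x l ∈ I.cI n}
  rI r := {p | ∃ l v, p = (l, (r, v) :: l) ∧ (endpt I x l, v) ∈ I.rI r}

/-- demand propagation step. -/
noncomputable def stepC (I : Interp ℕ R) (u : I.Dom) (r : R) (v : I.Dom) :
    Concept ℕ R → Concept ℕ R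
  | .ex r' E => if r' = r ∧ (u, v) ∈ I.rI r then E else .top
  | _ => .top

/-- demand assigned to each unraveling node. -/
noncomputable def demC (I : Interp ℕ R) (x : I.Dom) (D : Concept ℕ R) :
    List (R × I.Dom) → Concept ℕ R
  | [] => D
  | (r, v) :: l => stepC I (endpt I x l) r v (reduceC I (endpt I x l) (demC I x D l))

/-- `false` means: this node must get `B₃` (keep `B₂` false); `true`: gets `B₂`. -/
noncomputable def chC (I : Interp ℕ R) (x : I.Dom) (D : Concept ℕ R)
    (l : List (R × I.Dom)) : Bool :=
  if reduceC I (endpt I x l) (demC I x D l) = Concept.name 2 then false else true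

/-- node needs a choice: `A` holds but neither `B₂` nor `B₃`. -/
def AprC (I : Interp ℕ R) (x : I.Dom) (l : List (R × I.Dom)) : Prop :=
  endpt I x l ∈ I.cI 0 ∧ endpt I x l ∉ I.cI 2 ∧ endpt I x l ∉ I.cI 3

/-- the completed unraveling: a model of O₁₁. -/
noncomputable def JJ (I : Interp ℕ R) (x : I.Dom) (D : Concept ℕ R) : Interp ℕ R where
  Dom := List (R × I.Dom)
  cI n := {l | endpt I x l ∈ I.cI n ∨
    (n = 2 ∧ AprC I x l ∧ chC I x D l = true) ∨
    (n = 3 ∧ AprC I x l ∧ chC I x D l = false)}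
  rI := (TT I x).rI

def GoodC (I : Interp ℕ R) (x : I.Dom) (D : Concept ℕ R) (l : List (R × I.Dom))
    (G : Concept ℕ R) : Prop :=
  (G = .name 2 → chC I x D l = false) ∧
  (G = .name 3 → chC I x D l = true) ∧
  (∀ r E, G = .ex r E → ∀ v, (endpt I x l, v) ∈ I.rI r → demC I x D ((r, v) :: l) = E)

lemma goodDem (I : Interp ℕ R) (x : I.Dom) (D : Concept ℕ R) (l : List (R × I.Dom)) :
    GoodC I x D l (reduceC I (endpt I x l) (demC I x D l)) := by
  refine ⟨fun h2 => ?_, fun h3 => ?_, fun r E hex v hv => ?_⟩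
  · unfold chC; rw [if_pos h2]
  · unfold chC; rw [if_neg]; rw [h3]; simp
  · show stepC I (endpt I x l) r v (reduceC I (endpt I x l) (demC I x D l)) = E
    rw [hex]
    simp [stepC, hv]

/-- truth lemma for the unraveling. -/
lemma TT_interp (I : Interp ℕ R) (x : I.Dom) :
    ∀ E : Concept ℕ R, E.isEL → ∀ l, l ∈ (TT I x).interp E ↔ endpt I x l ∈ I.interp E := by
  intro E
  induction E with
  | top => intro _ l; simp [Interp.interp]
  | bot => intro h; exact h.elim
  | name n => intro _ l; exact Iff.rfl
  | neg c ih => intro h; exact h.elim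
  | conj c d ihc ihd => intro h l; exact and_congr (ihc h.1 l) (ihd h.2 l)
  | disj c d ihc ihd => intro h; exact h.elim
  | ex r c ih =>
      intro h l
      constructor
      · rintro ⟨m, ⟨l', v, hpeq, hv⟩, hm⟩
        obtain ⟨rfl, rfl⟩ := Prod.mk.injEq .. ▸ hpeq
        exact ⟨v, hv, (ih h _).mp hm⟩
      · rintro ⟨v, hv, hvc⟩
        exact ⟨(r, v) :: l, ⟨l, v, rfl, hv⟩, (ih h _).mpr hvc⟩
  | all r c ih => intro h; exact h.elim

lemma TT_le_JJ (I : Interp ℕ R) (x : I.Dom) (D : Concept ℕ R) :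
    ∀ E : Concept ℕ R, E.isEL →
      ∀ l, l ∈ (TT I x).interp E → l ∈ (JJ I x D).interp E := by
  intro E
  induction E with
  | top => intro _ l h; exact h
  | bot => intro h; exact h.elim
  | name n => intro _ l h; exact Or.inl h
  | neg c ih => intro h; exact h.elim
  | conj c d ihc ihd => intro h l hl; exact ⟨ihc h.1 l hl.1, ihd h.2 l hl.2⟩
  | disj c d ihc ihd => intro h; exact h.elim
  | ex r c ih =>
      rintro h l ⟨m, hm, hmc⟩
      exact ⟨m, hm, ih h m hmc⟩
  | all r c ih => intro h; exact h.elim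

lemma mainLem (I : Interp ℕ R) (x : I.Dom) (D : Concept ℕ R) :
    ∀ E : Concept ℕ R, E.isEL → ∀ l, endpt I x l ∉ I.interp E →
      GoodC I x D l (reduceC I (endpt I x l) E) → l ∉ (JJ I x D).interp E := by
  intro E
  induction E with
  | top => intro _ l h; exact absurd (Set.mem_univ _) h
  | bot => intro h; exact h.elim
  | name n =>
      intro _ l hnI hG hl
      rcases hl with h | ⟨rfl, hA, hch⟩ | ⟨rfl, hA, hch⟩
      · exact hnI h
      · rw [hG.1 rfl] at hch; exact absurd hch (by simp)
      · rw [hG.2.1 rfl] at hch; exact absurd hch (by simp)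
  | neg c ih => intro h; exact h.elim
  | conj c d ihc ihd =>
      intro hEL l hnI hG hl
      by_cases hu : endpt I x l ∈ I.interp c
      · have hnd : endpt I x l ∉ I.interp d := fun hd => hnI ⟨hu, hd⟩
        have hr : reduceC I (endpt I x l) (.conj c d) = reduceC I (endpt I x l) d := by
          rw [reduceC_conj, if_pos hu]
        exact ihd hEL.2 l hnd (hr ▸ hG) hl.2
      · have hr : reduceC I (endpt I x l) (.conj c d) = reduceC I (endpt I x l) c := by
          rw [reduceC_conj, if_neg hu]
        exact ihc hEL.1 l hu (hr ▸ hG) hl.1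
  | disj c d ihc ihd => intro h; exact h.elim
  | ex r c ih =>
      intro hEL l hnI hG hl
      obtain ⟨m, hm, hmc⟩ := hl
      obtain ⟨l', v, hpeq, hv⟩ := hm
      obtain ⟨rfl, rfl⟩ := Prod.mk.injEq .. ▸ hpeq
      have hdem : demC I x D ((r, v) :: l) = c :=
        (reduceC_ex I (endpt I x l) r c ▸ hG).2.2 r c rfl v hv
      have hvnc : v ∉ I.interp c := fun hc => hnI ⟨v, hv, hc⟩
      have hG' := goodDem I x D ((r, v) :: l)
      rw [hdem] at hG'
      exact ih hEL ((r, v) :: l) hvnc hG' hmc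
  | all r c ih => intro h; exact h.elim

lemma JJ_model (I : Interp ℕ R) (x : I.Dom) (D : Concept ℕ R)
    (hI : I.isModel (O₁₁' R)) : (JJ I x D).isModel (O₁₁ R) := by
  have h1 : I.interp (Concept.conj cB₁ cB₂) ⊆ I.interp cA :=
    hI (Concept.conj cB₁ cB₂, cA) (by simp [O₁₁'])
  have h2 : I.interp (Concept.conj cB₁ cB₃) ⊆ I.interp cA :=
    hI (Concept.conj cB₁ cB₃, cA) (by simp [O₁₁'])
  have h3 : I.interp cA ⊆ I.interp cB₁ := hI (cA, cB₁) (by simp [O₁₁'])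
  intro ci hci
  simp only [O₁₁, Set.mem_insert_iff, Set.mem_singleton_iff] at hci
  rcases hci with rfl | rfl
  · intro l hl
    obtain h0 | ⟨h, _⟩ | ⟨h, _⟩ := hl
    · have hB1 : endpt I x l ∈ I.cI 1 := h3 h0
      by_cases h2' : endpt I x l ∈ I.cI 2
      · exact Or.inl ⟨Or.inl hB1, Or.inl h2'⟩
      by_cases h3' : endpt I x l ∈ I.cI 3
      · exact Or.inr ⟨Or.inl hB1, Or.inl h3'⟩
      have hA : AprC I x l := ⟨h0, h2', h3'⟩
      cases hch : chC I x D l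
      · exact Or.inr ⟨Or.inl hB1, Or.inr (Or.inr ⟨rfl, hA, hch⟩)⟩
      · exact Or.inl ⟨Or.inl hB1, Or.inr (Or.inl ⟨rfl, hA, hch⟩)⟩
    · exact absurd h (by norm_num)
    · exact absurd h (by norm_num)
  · intro l hl
    rcases hl with ⟨hB1, hB2⟩ | ⟨hB1, hB3⟩
    · obtain hb1 | ⟨h, _⟩ | ⟨h, _⟩ := hB1
      swap; · exact absurd h (by norm_num)
      swap; · exact absurd h (by norm_num)
      obtain hb2 | ⟨_, hA, _⟩ | ⟨h, _⟩ := hB2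
      · exact Or.inl (h1 ⟨hb1, hb2⟩)
      · exact Or.inl hA.1
      · exact absurd h (by norm_num)
    · obtain hb1 | ⟨h, _⟩ | ⟨h, _⟩ := hB1
      swap; · exact absurd h (by norm_num)
      swap; · exact absurd h (by norm_num)
      obtain hb3 | ⟨h, _⟩ | ⟨_, hA, _⟩ := hB3
      · exact Or.inl (h2 ⟨hb1, hb3⟩)
      · exact absurd h (by norm_num)
      · exact Or.inl hA.1

end Stmt11Aux

theorem stmt11 {R : Type} (C D : Concept ℕ R)
    (hC : C.isEL) (hD : D.isEL)
    (hCn : C.names ⊆ {0, 1, 2, 3}) (hDn : D.names ⊆ {0, 1, 2, 3}) :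
    entails (O₁₁ R) C D ↔ entails (O₁₁' R) C D := by
  constructor
  · intro h Imod hImod y hy
    by_contra hyD
    have hJmod := JJ_model Imod y D hImod
    have hC_T : ([] : List (R × Imod.Dom)) ∈ (TT Imod y).interp C :=
      (TT_interp Imod y C hC []).mpr hy
    have hC_J := TT_le_JJ Imod y D C hC [] hC_T
    have hD_J := h (JJ Imod y D) hJmod hC_J
    have hG := goodDem Imod y D ([])
    exact mainLem Imod y D D hD [] hyD hG hD_J
  · intro h Imod hImod
    apply h
    intro ci hci
    have hA : Imod.interp cA ⊆
        Imod.interp (.disj (.conj cB₁ cB₂) (.conj cB₁ cB₃)) :=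
      hImod (cA, .disj (.conj cB₁ cB₂) (.conj cB₁ cB₃)) (by simp [O₁₁])
    have hA' : Imod.interp (.disj (.conj cB₁ cB₂) (.conj cB₁ cB₃)) ⊆
        Imod.interp cA :=
      hImod (.disj (.conj cB₁ cB₂) (.conj cB₁ cB₃), cA) (by simp [O₁₁])
    simp only [O₁₁', Set.mem_insert_iff, Set.mem_singleton_iff] at hci
    rcases hci with rfl | rfl | rfl
    · exact fun u hu => hA' (Or.inl hu)
    · exact fun u hu => hA' (Or.inr hu)
    · intro u hu
      rcases hA hu with ⟨h1, _⟩ | ⟨h1, _⟩ <;> exact h1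
end DL
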